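/- arXiv:1712.06645 — 3 statements merged into one kernel-verified Lean document; each statement's English description precedes it below -/
import Mathlib

section
/- The cardinality of the hyperbolic cross Λ_s^HC = { n ∈ ℕ₀^d : ∏_{k=1}^d (n_k+1) ≤ s+1 } satisfies |Λ_s^HC| ≤ 2 s³ 4^d for all integers s ≥ 1 and d ≥ 1. -/
/-!
Writing `N = s + 1`, the hyperbolic cross in dimension `d + 1` splits according to the first
coordinate: fixing `n₀ + 1 = j ∈ [1, N]`, the remaining coordinates form a hyperbolic cross
in dimension `d` with bound `⌊N / j⌋`. Hence a bound `C_d N²` propagates to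
`C_d N² ∑ 1/j² ≤ 2 C_d N²`, giving `|Λ| ≤ 2^d N² ≤ 2^d · 4 s²`, which is below `2 s³ 4^d`
once `d ≥ 1`; for `d = 0` the set is a single point.
-/

open Finset

/-- `hyperbolicCross d N` is the paper's `Λ_{N-1}^HC`. -/
def hyperbolicCross (d N : ℕ) : Finset (Fin d → ℕ) :=
  (Fintype.piFinset fun _ => range N).filter fun n => ∏ k, (n k + 1) ≤ N

lemma le_prod_add_one {ι : Type*} [Fintype ι] (n : ι → ℕ) (k : ι) : n k + 1 ≤ ∏ j, (n j + 1) :=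
  single_le_prod' (f := fun j => n j + 1) (fun _ _ => Nat.le_add_left 1 _) (mem_univ k)

@[simp]
lemma mem_hyperbolicCross {d N : ℕ} {n : Fin d → ℕ} :
    n ∈ hyperbolicCross d N ↔ ∏ k, (n k + 1) ≤ N := by
  refine ⟨fun h => (mem_filter.mp h).2, fun h => mem_filter.mpr ⟨?_, h⟩⟩
  exact Fintype.mem_piFinset.mpr fun k => mem_range.mpr ((le_prod_add_one n k).trans h)

lemma card_hyperbolicCross_zero_le (N : ℕ) : #(hyperbolicCross 0 N) ≤ N := by
  rcases N with _ | N
  · simp [hyperbolicCross]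
  · exact (card_le_one_of_subsingleton _).trans (Nat.le_add_left 1 N)

lemma card_hyperbolicCross_succ_le (d N : ℕ) :
    #(hyperbolicCross (d + 1) N) ≤ ∑ j ∈ Ioo 0 (N + 1), #(hyperbolicCross d (N / j)) := by
  rw [← card_sigma]
  refine card_le_card_of_injOn (fun n => ⟨n 0 + 1, Fin.tail n⟩) (fun n hn => ?_) ?_
  · have hprod : (n 0 + 1) * ∏ k, (Fin.tail n k + 1) ≤ N := by
      rwa [mem_coe, mem_hyperbolicCross, Fin.prod_univ_succ] at hn
    simp only [coe_sigma, Set.mem_sigma_iff, coe_Ioo, Set.mem_Ioo, mem_coe, mem_hyperbolicCross]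
    refine ⟨⟨Nat.succ_pos _, ?_⟩, (Nat.le_div_iff_mul_le (Nat.succ_pos _)).mpr ?_⟩
    · exact Nat.lt_succ_of_le ((le_prod_add_one n 0).trans (mem_hyperbolicCross.mp hn))
    · rwa [mul_comm]
  · intro n _ m _ h
    obtain ⟨h0, htail⟩ := Sigma.mk.inj_iff.mp h
    rw [← Fin.cons_self_tail n, ← Fin.cons_self_tail m, Nat.succ_injective h0, eq_of_heq htail]

lemma sum_Ioo_div_sq_le (N : ℕ) : ∑ j ∈ Ioo 0 (N + 1), (N / j) ^ 2 ≤ 2 * N ^ 2 := by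
  have key : ∑ j ∈ Ioo 0 (N + 1), ((N / j : ℕ) : ℝ) ^ 2 ≤ 2 * (N : ℝ) ^ 2 :=
    calc ∑ j ∈ Ioo 0 (N + 1), ((N / j : ℕ) : ℝ) ^ 2
        ≤ ∑ j ∈ Ioo 0 (N + 1), (N : ℝ) ^ 2 * ((j : ℝ) ^ 2)⁻¹ := by
          gcongr with j
          rw [← div_eq_mul_inv, ← div_pow]
          gcongr
          exact Nat.cast_div_le
      _ = (N : ℝ) ^ 2 * ∑ j ∈ Ioo 0 (N + 1), ((j : ℝ) ^ 2)⁻¹ := (mul_sum _ _ _).symm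
      _ ≤ (N : ℝ) ^ 2 * 2 := by
          gcongr
          simpa using sum_Ioo_inv_sq_le (α := ℝ) 0 (N + 1)
      _ = 2 * (N : ℝ) ^ 2 := mul_comm _ _
  exact_mod_cast key

lemma card_hyperbolicCross_le (d N : ℕ) : #(hyperbolicCross d N) ≤ 2 ^ d * N ^ 2 := by
  induction d generalizing N with
  | zero => simpa using (card_hyperbolicCross_zero_le N).trans (Nat.le_self_pow two_ne_zero N)
  | succ d ih =>
    calc #(hyperbolicCross (d + 1) N)
        ≤ ∑ j ∈ Ioo 0 (N + 1), #(hyperbolicCross d (N / j)) := card_hyperbolicCross_succ_le d N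
      _ ≤ ∑ j ∈ Ioo 0 (N + 1), 2 ^ d * (N / j) ^ 2 := sum_le_sum fun j _ => ih (N / j)
      _ = 2 ^ d * ∑ j ∈ Ioo 0 (N + 1), (N / j) ^ 2 := (mul_sum _ _ _).symm
      _ ≤ 2 ^ d * (2 * N ^ 2) := Nat.mul_le_mul_left _ (sum_Ioo_div_sq_le N)
      _ = 2 ^ (d + 1) * N ^ 2 := by ring

theorem stmt3_general (d s : ℕ) (hs : 1 ≤ s) :
    Set.ncard {n : Fin d → ℕ | ∏ k, (n k + 1) ≤ s + 1} ≤ 2 * s ^ 3 * 4 ^ d := by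
  have hset : {n : Fin d → ℕ | ∏ k, (n k + 1) ≤ s + 1} = ↑(hyperbolicCross d (s + 1)) := by
    ext n; simp
  rw [hset, Set.ncard_coe_finset]
  rcases d with _ | d
  · calc #(hyperbolicCross 0 (s + 1)) ≤ s + 1 := card_hyperbolicCross_zero_le _
      _ ≤ 2 * s ^ 3 * 4 ^ 0 := by nlinarith [Nat.le_self_pow three_ne_zero s]
  · calc #(hyperbolicCross (d + 1) (s + 1)) ≤ 2 ^ (d + 1) * (s + 1) ^ 2 :=
          card_hyperbolicCross_le _ _
      _ ≤ 2 ^ (d + 1) * (2 * s ^ 3 * 2 ^ (d + 1)) := by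
        have : 2 ≤ 2 ^ (d + 1) := Nat.le_self_pow d.succ_ne_zero 2
        gcongr
        nlinarith [Nat.mul_le_mul hs hs, Nat.mul_le_mul hs (Nat.mul_le_mul hs hs)]
      _ = 2 * s ^ 3 * 4 ^ (d + 1) := by rw [show (4 : ℕ) = 2 * 2 from rfl, mul_pow]; ring

/-- The cardinality of the hyperbolic cross
`Λ_s^HC = { n ∈ ℕ₀^d : ∏_{k=1}^d (n_k+1) ≤ s+1 }` is at most `2 s³ 4^d`. -/
theorem stmt3 (d s : ℕ) (hd : 1 ≤ d) (hs : 1 ≤ s) :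
    Set.ncard {n : Fin d → ℕ | ∏ k, (n k + 1) ≤ s + 1} ≤ 2 * s ^ 3 * 4 ^ d :=
  stmt3_general d s hs
end

section
/- For the tensor-product Sturm–Liouville eigenfunctions, if κ_n = u_n⁻² sup_y (χ(y)/μ(y))|φ_n'(y)|² in one dimension and κ_n = Σ_k κ_{n_k} for multi-indices, then for all y ∈ D and n ∈ ℕ₀^d: Σ_{k=0}^d τ_k(y) |∂_k φ_n(y)|² ≤ u_n² (1 + κ_n), where u_n = ∏_k u_{n_k} are the tensorized intrinsic weights. -/
/-! Each term of the left-hand side factorizes over the coordinates: the `τ₀`-term is the product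
of the one-dimensional quantities `aⱼ = (ν/μ)|φ_{nⱼ}|² ≤ u_{nⱼ}²`, and the `τ_k`-term is
`(χ/μ)|φ'_{n_k}|²` (at most `κ_{n_k} u_{n_k}²`) times the product of the `aⱼ` with `j ≠ k`.
Bounding every factor coordinatewise gives `∏ⱼ u_{nⱼ}² (1 + Σ_k κ_{n_k})`. -/

open Finset

section Tensorization

variable {ι : Type*} [Fintype ι]

theorem prod_add_sum_mul_prod_erase_le [DecidableEq ι] {R : Type*} [CommSemiring R]
    [PartialOrder R] [IsOrderedRing R] {a b c κ : ι → R} (ha : ∀ i, 0 ≤ a i) (hab : ∀ i, a i ≤ b i)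
    (hc : ∀ i, c i ≤ κ i * b i) (hκ : ∀ i, 0 ≤ κ i) :
    ∏ i, a i + ∑ k, c k * ∏ j ∈ univ.erase k, a j ≤ (∏ i, b i) * (1 + ∑ k, κ k) := by
  have hprod : ∀ s : Finset ι, ∏ j ∈ s, a j ≤ ∏ j ∈ s, b j := fun s =>
    prod_le_prod (fun j _ => ha j) (fun j _ => hab j)
  have hterm : ∀ k, c k * ∏ j ∈ univ.erase k, a j ≤ κ k * ∏ i, b i := fun k =>
    calc c k * ∏ j ∈ univ.erase k, a j
        ≤ (κ k * b k) * ∏ j ∈ univ.erase k, b j :=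
          mul_le_mul (hc k) (hprod _) (prod_nonneg fun j _ => ha j)
            (mul_nonneg (hκ k) ((ha k).trans (hab k)))
      _ = κ k * ∏ i, b i := by rw [mul_assoc, mul_prod_erase _ _ (mem_univ k)]
  calc ∏ i, a i + ∑ k, c k * ∏ j ∈ univ.erase k, a j
      ≤ ∏ i, b i + ∑ k, κ k * ∏ i, b i :=
        add_le_add (hprod _) (sum_le_sum fun k _ => hterm k)
    _ = (∏ i, b i) * (1 + ∑ k, κ k) := by rw [← sum_mul]; ring

variable {𝕜 : Type*} [NormedField 𝕜]

theorem div_prod_mul_norm_prod_sq (f g : ι → ℝ) (ψ : ι → 𝕜) :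
    (∏ i, f i) / (∏ i, g i) * ‖∏ i, ψ i‖ ^ 2 = ∏ i, f i / g i * ‖ψ i‖ ^ 2 := by
  rw [prod_mul_distrib, prod_div_distrib, norm_prod, prod_pow]

theorem div_prod_mul_norm_mul_prod_erase_sq [DecidableEq ι] (f g : ι → ℝ) (ψ : ι → 𝕜)
    (c : ℝ) (z : 𝕜) (k : ι) :
    (c * ∏ j ∈ univ.erase k, f j) / (∏ i, g i) * ‖z * ∏ j ∈ univ.erase k, ψ j‖ ^ 2
      = c / g k * ‖z‖ ^ 2 * ∏ j ∈ univ.erase k, f j / g j * ‖ψ j‖ ^ 2 := by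
  rw [← mul_prod_erase _ g (mem_univ k), mul_div_mul_comm, norm_mul, norm_prod, mul_pow,
    prod_mul_distrib, prod_div_distrib, prod_pow]
  ring

end Tensorization

theorem stmt11_general (d : ℕ) (χ ν μ : ℝ → ℝ) (φ1 Dφ1 : ℕ → ℝ → ℂ) (u1 κ1 : ℕ → ℝ)
    (hμ : ∀ y ∈ Set.Ioo (-1 : ℝ) 1, 0 < μ y) (hν : ∀ y ∈ Set.Ioo (-1 : ℝ) 1, 0 ≤ ν y)
    (hκ1pos : ∀ n, 0 ≤ κ1 n)
    (hu1 : ∀ n, ∀ y ∈ Set.Ioo (-1 : ℝ) 1, ν y / μ y * ‖φ1 n y‖ ^ 2 ≤ u1 n ^ 2)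
    (hκ1 : ∀ n, ∀ y ∈ Set.Ioo (-1 : ℝ) 1,
      χ y / μ y * ‖Dφ1 n y‖ ^ 2 ≤ κ1 n * u1 n ^ 2)
    (n : Fin d → ℕ) (y : Fin d → ℝ) (hy : ∀ j, y j ∈ Set.Ioo (-1 : ℝ) 1) :
    ((∏ j, ν (y j)) / ∏ j, μ (y j)) * ‖∏ j, φ1 (n j) (y j)‖ ^ 2
      + (∑ k, ((χ (y k) * ∏ j ∈ Finset.univ.erase k, ν (y j)) / ∏ j, μ (y j)) *
          ‖Dφ1 (n k) (y k) * ∏ j ∈ Finset.univ.erase k, φ1 (n j) (y j)‖ ^ 2)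
      ≤ (∏ j, u1 (n j)) ^ 2 * (1 + ∑ k, κ1 (n k)) := by
  simp only [div_prod_mul_norm_prod_sq, div_prod_mul_norm_mul_prod_erase_sq, ← prod_pow]
  refine prod_add_sum_mul_prod_erase_le (fun j => ?_) (fun j => hu1 _ _ (hy j))
    (fun k => hκ1 _ _ (hy k)) (fun k => hκ1pos _)
  exact mul_nonneg (div_nonneg (hν _ (hy j)) (hμ _ (hy j)).le) (sq_nonneg _)

/-- Tensorized coherence bound: if in one dimension
`(ν/μ)|φ_n|² ≤ u_n²` and `(χ/μ)|φ_n'|² ≤ κ_n u_n²` on `(-1,1)`, then for tensor-product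
eigenfunctions, for all `y ∈ D = (-1,1)^d` and multi-indices `n`,
`Σ_{k=0}^d τ_k(y)|∂_k φ_n(y)|² ≤ u_n²(1+κ_n)` with `u_n = ∏_k u_{n_k}` and
`κ_n = Σ_k κ_{n_k}`. -/
theorem stmt11 (d : ℕ) (χ ν μ : ℝ → ℝ) (φ1 Dφ1 : ℕ → ℝ → ℂ) (u1 κ1 : ℕ → ℝ)
    (hμ : ∀ y ∈ Set.Ioo (-1 : ℝ) 1, 0 < μ y) (hν : ∀ y ∈ Set.Ioo (-1 : ℝ) 1, 0 ≤ ν y)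
    (hχ : ∀ y ∈ Set.Ioo (-1 : ℝ) 1, 0 ≤ χ y)
    (hu1pos : ∀ n, 0 ≤ u1 n) (hκ1pos : ∀ n, 0 ≤ κ1 n)
    (hu1 : ∀ n, ∀ y ∈ Set.Ioo (-1 : ℝ) 1, ν y / μ y * ‖φ1 n y‖ ^ 2 ≤ u1 n ^ 2)
    (hκ1 : ∀ n, ∀ y ∈ Set.Ioo (-1 : ℝ) 1,
      χ y / μ y * ‖Dφ1 n y‖ ^ 2 ≤ κ1 n * u1 n ^ 2)
    (n : Fin d → ℕ) (y : Fin d → ℝ) (hy : ∀ j, y j ∈ Set.Ioo (-1 : ℝ) 1) :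
    ((∏ j, ν (y j)) / ∏ j, μ (y j)) * ‖∏ j, φ1 (n j) (y j)‖ ^ 2
      + (∑ k, ((χ (y k) * ∏ j ∈ Finset.univ.erase k, ν (y j)) / ∏ j, μ (y j)) *
          ‖Dφ1 (n k) (y k) * ∏ j ∈ Finset.univ.erase k, φ1 (n j) (y j)‖ ^ 2)
      ≤ (∏ j, u1 (n j)) ^ 2 * (1 + ∑ k, κ1 (n k)) :=
  stmt11_general d χ ν μ φ1 Dφ1 u1 κ1 hμ hν hκ1pos hu1 hκ1 n y hy
end

section
/- For Jacobi polynomials P_n^{(α,β)} with α, β ≥ -1/2, there exists a constant C depending only on α and β such that sup_{y∈(-1,1)} √(1-y²) |(P_n^{(α,β)})'(y)| ≤ C n^{1+q} for all n ≥ 1, where q = max{α, β}. -/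
/-- Generalized binomial coefficient `binom(a, k)` for real `a`. -/
noncomputable def genBinom (a : ℝ) (k : ℕ) : ℝ :=
  (∏ i ∈ Finset.range k, (a - i)) / Nat.factorial k

/-- The Jacobi polynomial `P_n^{(α,β)}`, normalized by `P_n^{(α,β)}(1) = binom(n+α, n)`,
via the explicit hypergeometric sum. -/
noncomputable def jacobiP (α β : ℝ) (n : ℕ) (x : ℝ) : ℝ :=
  ∑ k ∈ Finset.range (n + 1),
    genBinom (n + α) (n - k) * genBinom (n + β) k * ((x - 1) / 2) ^ k * ((x + 1) / 2) ^ (n - k)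

/-!
In the variable `t = (x - 1) / 2` the coefficients of `P = P_n^{(α,β)}` satisfy a two-term
recurrence, so `P` solves the Jacobi equation
`(1 - x²) P'' + (β - α - (α + β + 2) x) P' + n (n + α + β + 1) P = 0`.
Along a solution, Sonin's function `P² + (1 - x²) P'² / (n (n + α + β + 1))` has derivative
`2 P'² ((α + β + 1) x + α - β) / (n (n + α + β + 1))`; for `α + β + 1 ≥ 0` this changes sign at
most once, from `-` to `+`, so the function is maximal at `x = ±1`, where it equals
`binom(n + α, n)²` resp. `binom(n + β, n)²`. Finally
`binom(n + γ, n) = ∏_{k=1}^n (1 + γ / k) ≤ exp (γ H_n) ≤ e^{|γ|} n^γ`.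
-/

open Finset Real

namespace Ring

variable {R : Type*} [CommRing R] [BinomialRing R]

theorem succ_mul_choose_succ (r : R) (k : ℕ) :
    (k + 1 : R) * choose r (k + 1) = r * choose (r - 1) k := by
  have := choose_smul_choose r (n := k + 1) (k := 1) (by omega)
  simpa [choose_one_right, nsmul_eq_mul] using this

theorem succ_mul_choose_succ' (r : R) (k : ℕ) :
    (k + 1 : R) * choose r (k + 1) = (r - k) * choose r k := by
  have := choose_smul_choose r (n := k + 1) (k := k) (by omega)
  simpa [choose_one_right, nsmul_eq_mul, mul_comm] using this

theorem sum_choose_mul_choose_mul_choose (a b : R) {m n : ℕ} (hmn : m ≤ n) :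
    ∑ k ∈ range (m + 1), choose a (n - k) * choose b k * (n - k).choose (m - k) =
      choose a (n - m) * choose (b + (a - (n - m : ℕ))) m := by
  have hterm : ∀ k ∈ range (m + 1), choose a (n - k) * choose b k * (n - k).choose (m - k) =
      choose a (n - m) * (choose b k * choose (a - (n - m : ℕ)) (m - k)) := by
    intro k hk
    have hkm : k ≤ m := Nat.lt_succ_iff.mp (mem_range.mp hk)
    have := choose_smul_choose a (n := n - k) (k := n - m) (by omega)
    rw [Nat.choose_symm_of_eq_add (show n - k = n - m + (m - k) by omega), nsmul_eq_mul,
      show n - k - (n - m) = m - k by omega] at this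
    linear_combination choose b k * this
  rw [sum_congr rfl hterm, ← mul_sum, add_choose_eq m (Commute.all _ _),
    Nat.sum_antidiagonal_eq_sum_range_succ (fun i j => choose b i * choose (a - (n - m : ℕ)) j)]

end Ring

open Polynomial in
theorem genBinom_eq_choose (a : ℝ) (k : ℕ) : genBinom a k = Ring.choose a k := by
  rw [genBinom, Ring.choose_eq_smul, smul_eq_mul, ← descPochhammer_eval_eq_prod_range,
    inv_mul_eq_div, ← aeval_eq_smeval, aeval_def, ← eval_map, descPochhammer_map]

theorem choose_natCast_add_succ (γ : ℝ) (n : ℕ) :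
    Ring.choose ((n + 1 : ℕ) + γ) (n + 1) = (1 + γ / (n + 1)) * Ring.choose (n + γ) n := by
  have h := Ring.succ_mul_choose_succ ((n + 1 : ℕ) + γ) n
  rw [show ((n + 1 : ℕ) : ℝ) + γ - 1 = n + γ by push_cast; ring] at h
  push_cast at h ⊢
  field_simp
  linear_combination h

theorem choose_natCast_add_nonneg {γ : ℝ} (hγ : -1 ≤ γ) (n : ℕ) :
    0 ≤ Ring.choose (n + γ : ℝ) n := by
  induction n with
  | zero => simp
  | succ n ih =>
    rw [choose_natCast_add_succ]
    have : -1 ≤ γ / (n + 1) := by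
      rw [le_div_iff₀ (by positivity)]
      linarith [n.cast_nonneg (α := ℝ)]
    exact mul_nonneg (by linarith) ih

theorem choose_natCast_add_le_exp {γ : ℝ} (hγ : -1 ≤ γ) (n : ℕ) :
    Ring.choose (n + γ : ℝ) n ≤ exp (γ * harmonic n) := by
  induction n with
  | zero => simp
  | succ n ih =>
    rw [choose_natCast_add_succ, harmonic_succ]
    push_cast
    rw [mul_add, exp_add, mul_comm (exp _)]
    refine mul_le_mul ?_ ih (choose_natCast_add_nonneg hγ n) (exp_pos _).le
    simpa [add_comm, div_eq_mul_inv] using add_one_le_exp (γ * ((n : ℝ) + 1)⁻¹)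

theorem exp_mul_harmonic_le (γ : ℝ) {n : ℕ} (hn : 0 < n) :
    exp (γ * harmonic n) ≤ exp |γ| * n ^ γ := by
  have hlog : log n ≤ harmonic n := by simpa using log_le_harmonic_floor n n.cast_nonneg
  have hharm : harmonic n ≤ 1 + log n := harmonic_le_one_add_log n
  have hgap : γ * (harmonic n - log n) ≤ |γ| :=
    calc γ * (harmonic n - log n) ≤ |γ| * |harmonic n - log n| :=
          (le_abs_self _).trans (abs_mul _ _).le
      _ ≤ |γ| * 1 := by gcongr; exact abs_le.mpr ⟨by linarith, by linarith⟩
      _ = |γ| := mul_one _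
  rw [rpow_def_of_pos (by exact_mod_cast hn), ← exp_add]
  exact exp_le_exp.mpr (by linarith)

theorem choose_natCast_add_le {γ : ℝ} (hγ : -1 ≤ γ) {n : ℕ} (hn : 0 < n) :
    Ring.choose (n + γ : ℝ) n ≤ exp |γ| * n ^ γ :=
  (choose_natCast_add_le_exp hγ n).trans (exp_mul_harmonic_le γ hn)

-- The truncated exponents at `m < 2` are harmless: their coefficients vanish.
theorem pow_hypergeometric_eq (a s t : ℝ) (m : ℕ) :
    t * (1 + t) * (m * (m - 1) * t ^ (m - 2)) + (a + (s + 1) * t) * (m * t ^ (m - 1)) =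
      m * (m + s) * t ^ m + m * (m - 1 + a) * t ^ (m - 1) := by
  match m with
  | 0 => simp
  | 1 => push_cast; ring
  | k + 2 => simp only [Nat.add_sub_cancel, show k + 2 - 1 = k + 1 by omega]; push_cast; ring

theorem sum_hypergeometric_eq {a s : ℝ} {n : ℕ} {c : ℕ → ℝ}
    (hc : ∀ m < n, (m + 1) * (m + a) * c (m + 1) = (n - m) * (n + m + s) * c m) (t : ℝ) :
    t * (1 + t) * ∑ m ∈ range (n + 1), c m * (m * (m - 1) * t ^ (m - 2)) +
        (a + (s + 1) * t) * ∑ m ∈ range (n + 1), c m * (m * t ^ (m - 1)) =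
      n * (n + s) * ∑ m ∈ range (n + 1), c m * t ^ m := by
  have hshift : ∑ m ∈ range (n + 1), c m * (m * (m - 1 + a) * t ^ (m - 1)) =
      ∑ m ∈ range (n + 1), (n - m) * (n + m + s) * c m * t ^ m := by
    rw [sum_range_succ', sum_range_succ]
    simp only [CharP.cast_eq_zero, zero_mul, mul_zero, add_zero, sub_self]
    refine sum_congr rfl fun m hm => ?_
    rw [Nat.add_sub_cancel, ← hc m (mem_range.mp hm)]
    push_cast; ring
  calc _ = ∑ m ∈ range (n + 1), c m * (m * (m + s) * t ^ m) +
        ∑ m ∈ range (n + 1), c m * (m * (m - 1 + a) * t ^ (m - 1)) := by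
        simp only [mul_sum, ← sum_add_distrib]
        refine sum_congr rfl fun m _ => ?_
        linear_combination c m * pow_hypergeometric_eq a s t m
    _ = _ := by
        rw [hshift, mul_sum, ← sum_add_distrib]
        refine sum_congr rfl fun m _ => by ring

theorem hasDerivAt_sum_mul_pow (c : ℕ → ℝ) (s : Finset ℕ) (t : ℝ) :
    HasDerivAt (fun t => ∑ m ∈ s, c m * t ^ m) (∑ m ∈ s, c m * (m * t ^ (m - 1))) t :=
  HasDerivAt.fun_sum fun m _ => (hasDerivAt_pow m t).const_mul (c m)

theorem hasDerivAt_sum_mul_natCast_mul_pow (c : ℕ → ℝ) (s : Finset ℕ) (t : ℝ) :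
    HasDerivAt (fun t => ∑ m ∈ s, c m * (m * t ^ (m - 1)))
      (∑ m ∈ s, c m * (m * (m - 1) * t ^ (m - 2))) t := by
  refine HasDerivAt.fun_sum fun m _ =>
    (((hasDerivAt_pow (m - 1) t).const_mul (m : ℝ)).const_mul (c m)).congr_deriv ?_
  rcases m with _ | m
  · simp
  · rw [show m + 1 - 2 = m - 1 by omega]
    push_cast
    ring

theorem HasDerivAt.comp_sub_one_div_two {g : ℝ → ℝ} {g' x : ℝ}
    (hg : HasDerivAt g g' ((x - 1) / 2)) : HasDerivAt (fun y => g ((y - 1) / 2)) (g' / 2) x :=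
  (hg.comp x (((hasDerivAt_id x).sub_const 1).div_const 2)).congr_deriv (by ring)

theorem le_max_of_hasDerivAt_mul_monotone {f g h : ℝ → ℝ} (hf : ∀ x, HasDerivAt f (g x * h x) x)
    (hg : ∀ x, 0 ≤ g x) (hh : Monotone h) {u v z : ℝ} (hz : z ∈ Set.Icc u v) :
    f z ≤ max (f u) (f v) := by
  have hcont : Continuous f := continuous_iff_continuousAt.mpr fun x => (hf x).continuousAt
  have hdiff : Differentiable ℝ f := fun x => (hf x).differentiableAt
  rcases le_or_gt (h z) 0 with hhz | hhz
  · have hanti : AntitoneOn f (Set.Icc u z) :=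
      antitoneOn_of_deriv_nonpos (convex_Icc u z) hcont.continuousOn hdiff.differentiableOn
        fun x hx => by
          rw [interior_Icc] at hx
          rw [(hf x).deriv]
          exact mul_nonpos_of_nonneg_of_nonpos (hg x) ((hh hx.2.le).trans hhz)
    exact le_max_of_le_left (hanti ⟨le_rfl, hz.1⟩ ⟨hz.1, le_rfl⟩ hz.1)
  · have hmono : MonotoneOn f (Set.Icc z v) :=
      monotoneOn_of_deriv_nonneg (convex_Icc z v) hcont.continuousOn hdiff.differentiableOn
        fun x hx => by
          rw [interior_Icc] at hx
          rw [(hf x).deriv]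
          exact mul_nonneg (hg x) (hhz.le.trans (hh hx.1.le))
    exact le_max_of_le_right (hmono ⟨le_rfl, hz.2⟩ ⟨hz.2, le_rfl⟩ hz.2)

theorem sq_deriv_le_of_jacobi_ode {P : ℝ → ℝ} {a b K : ℝ} (hP : Differentiable ℝ P)
    (hP' : Differentiable ℝ (deriv P))
    (hode : ∀ x, (1 - x ^ 2) * deriv (deriv P) x + (b - a - (a + b + 2) * x) * deriv P x +
      K * P x = 0)
    (hK : 0 < K) (hab : 0 ≤ a + b + 1) {z : ℝ} (hz : z ∈ Set.Icc (-1) 1) :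
    (1 - z ^ 2) * deriv P z ^ 2 ≤ K * max (P (-1) ^ 2) (P 1 ^ 2) := by
  set E : ℝ → ℝ := fun x => P x ^ 2 + (1 - x ^ 2) * deriv P x ^ 2 / K
  have hE : ∀ x, HasDerivAt E (2 * deriv P x ^ 2 / K * ((a + b + 1) * x + (a - b))) x := by
    intro x
    have := ((hP x).hasDerivAt.pow 2).add
      ((((hasDerivAt_pow 2 x).const_sub 1).mul ((hP' x).hasDerivAt.pow 2)).div_const K)
    refine this.congr_deriv ?_
    simp only [Pi.pow_apply]
    field_simp
    linear_combination 2 * deriv P x * hode x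
  have hmax := le_max_of_hasDerivAt_mul_monotone hE (fun x => by positivity)
    (fun x y hxy => by dsimp only; gcongr) hz
  have hE_end : ∀ x : ℝ, x ^ 2 = 1 → E x = P x ^ 2 := fun x hx => by simp [E, hx]
  rw [hE_end (-1) (by norm_num), hE_end 1 (by norm_num)] at hmax
  rw [← div_le_iff₀' hK]
  exact (le_add_of_nonneg_left (sq_nonneg _)).trans hmax

noncomputable def jacobiCoeff (α β : ℝ) (n m : ℕ) : ℝ :=
  Ring.choose (n + α : ℝ) (n - m) * Ring.choose (n + α + β + m : ℝ) m

section Jacobi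

variable (α β : ℝ) (n : ℕ)

theorem jacobiP_eq_sum (x : ℝ) :
    jacobiP α β n x = ∑ m ∈ range (n + 1), jacobiCoeff α β n m * ((x - 1) / 2) ^ m := by
  set t := (x - 1) / 2
  have hx : (x + 1) / 2 = t + 1 := by ring
  let f k j := Ring.choose (n + α : ℝ) (n - k) * Ring.choose (n + β : ℝ) k *
    (n - k).choose j * t ^ (k + j)
  calc jacobiP α β n x = ∑ k ∈ range (n + 1), ∑ j ∈ range (n + 1 - k), f k j := by
        simp only [jacobiP, genBinom_eq_choose, hx, add_pow, one_pow, mul_one, mul_sum]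
        refine sum_congr rfl fun k hk => ?_
        rw [Nat.sub_add_comm (Nat.lt_succ_iff.mp (mem_range.mp hk))]
        refine sum_congr rfl fun j _ => ?_
        simp only [f, pow_add]
        ring
    _ = ∑ m ∈ range (n + 1), ∑ k ∈ range (m + 1), f k (m - k) := (sum_range_diag_flip _ f).symm
    _ = _ := by
        refine sum_congr rfl fun m hm => ?_
        have hmn : m ≤ n := Nat.lt_succ_iff.mp (mem_range.mp hm)
        have := Ring.sum_choose_mul_choose_mul_choose (n + α : ℝ) (n + β) hmn
        rw [Nat.cast_sub hmn, show (n + β : ℝ) + (n + α - (n - m)) = n + α + β + m by ring] at this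
        rw [jacobiCoeff, ← this, sum_mul]
        refine sum_congr rfl fun k hk => ?_
        simp only [f]
        rw [Nat.add_sub_cancel' (Nat.lt_succ_iff.mp (mem_range.mp hk))]

variable {α β n} in
theorem jacobiCoeff_succ {m : ℕ} (hm : m < n) :
    (m + 1) * (m + (α + 1)) * jacobiCoeff α β n (m + 1) =
      (n - m) * (n + m + (α + β + 1)) * jacobiCoeff α β n m := by
  obtain ⟨d, rfl⟩ := Nat.exists_eq_add_of_lt hm
  simp only [jacobiCoeff, show m + d + 1 - (m + 1) = d by omega,
    show m + d + 1 - m = d + 1 by omega]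
  push_cast
  have h1 := Ring.succ_mul_choose_succ ((m : ℝ) + d + 1 + α + β + (m + 1)) m
  have h2 := Ring.succ_mul_choose_succ' ((m : ℝ) + d + 1 + α) d
  rw [show (m : ℝ) + d + 1 + α + β + (m + 1) - 1 = m + d + 1 + α + β + m by ring] at h1
  rw [show (m : ℝ) + d + 1 + α - d = m + (α + 1) by ring] at h2
  linear_combination (m + (α + 1)) * Ring.choose ((m : ℝ) + d + 1 + α) d * h1
    - ((m : ℝ) + d + 1 + α + β + (m + 1)) * Ring.choose ((m : ℝ) + d + 1 + α + β + m) m * h2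

theorem hasDerivAt_jacobiP (x : ℝ) :
    HasDerivAt (jacobiP α β n)
      ((∑ m ∈ range (n + 1), jacobiCoeff α β n m * (m * ((x - 1) / 2) ^ (m - 1))) / 2) x := by
  rw [funext (jacobiP_eq_sum α β n)]
  exact (hasDerivAt_sum_mul_pow _ _ _).comp_sub_one_div_two

theorem hasDerivAt_deriv_jacobiP (x : ℝ) :
    HasDerivAt (deriv (jacobiP α β n))
      ((∑ m ∈ range (n + 1),
        jacobiCoeff α β n m * (m * (m - 1) * ((x - 1) / 2) ^ (m - 2))) / 2 / 2) x := by
  rw [funext fun x => (hasDerivAt_jacobiP α β n x).deriv]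
  exact ((hasDerivAt_sum_mul_natCast_mul_pow _ _ _).comp_sub_one_div_two).div_const 2

theorem jacobiP_ode (x : ℝ) :
    (1 - x ^ 2) * deriv (deriv (jacobiP α β n)) x +
        (β - α - (α + β + 2) * x) * deriv (jacobiP α β n) x +
      n * (n + α + β + 1) * jacobiP α β n x = 0 := by
  rw [(hasDerivAt_deriv_jacobiP α β n x).deriv, (hasDerivAt_jacobiP α β n x).deriv,
    jacobiP_eq_sum]
  linear_combination -sum_hypergeometric_eq (c := jacobiCoeff α β n)
    (fun m hm => jacobiCoeff_succ hm) ((x - 1) / 2)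

theorem jacobiP_one : jacobiP α β n 1 = Ring.choose (n + α : ℝ) n := by
  simp [jacobiP_eq_sum, jacobiCoeff, sum_range_succ']

theorem jacobiP_neg_one : jacobiP α β n (-1) = (-1) ^ n * Ring.choose (n + β : ℝ) n := by
  rw [jacobiP, sum_range_succ, sum_eq_zero fun k hk => by
    rw [show (-1 + 1 : ℝ) / 2 = 0 by norm_num,
      zero_pow (Nat.sub_ne_zero_of_lt (mem_range.mp hk)), mul_zero]]
  norm_num [genBinom_eq_choose, mul_comm]

variable {α β n} in
theorem max_sq_jacobiP_le (hα : -1 ≤ α) (hβ : -1 ≤ β) (hn : 0 < n) :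
    max (jacobiP α β n (-1) ^ 2) (jacobiP α β n 1 ^ 2) ≤ (exp (|α| + |β|) * n ^ max α β) ^ 2 := by
  have hchoose : ∀ γ, -1 ≤ γ → |γ| ≤ |α| + |β| → γ ≤ max α β →
      Ring.choose (n + γ : ℝ) n ^ 2 ≤ (exp (|α| + |β|) * n ^ max α β) ^ 2 := by
    intro γ hγ habs hmax
    refine pow_le_pow_left₀ (choose_natCast_add_nonneg hγ n)
      ((choose_natCast_add_le hγ hn).trans ?_) 2
    have : (1 : ℝ) ≤ n := by exact_mod_cast hn
    gcongr
  rw [jacobiP_neg_one, jacobiP_one, mul_pow, ← pow_mul, pow_mul', neg_one_sq, one_pow, one_mul]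
  exact max_le (hchoose β hβ (le_add_of_nonneg_left (abs_nonneg α)) (le_max_right _ _))
    (hchoose α hα (le_add_of_nonneg_right (abs_nonneg β)) (le_max_left _ _))

variable {α β n} in
theorem one_sub_sq_mul_sq_deriv_jacobiP_le (hα : -1 ≤ α) (hβ : -1 ≤ β) (hab : 0 ≤ α + β + 1)
    (hn : 0 < n) {y : ℝ} (hy : y ∈ Set.Icc (-1) 1) :
    (1 - y ^ 2) * deriv (jacobiP α β n) y ^ 2 ≤
      (α + β + 2) * (n * (exp (|α| + |β|) * n ^ max α β)) ^ 2 := by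
  have hn' : (1 : ℝ) ≤ n := by exact_mod_cast hn
  have hK : 0 < n * (n + α + β + 1 : ℝ) := by nlinarith
  have hKle : n * (n + α + β + 1 : ℝ) ≤ (α + β + 2) * n ^ 2 := by
    nlinarith [mul_nonneg (mul_nonneg n.cast_nonneg (sub_nonneg.mpr hn')) hab]
  calc _ ≤ n * (n + α + β + 1 : ℝ) * max (jacobiP α β n (-1) ^ 2) (jacobiP α β n 1 ^ 2) :=
        sq_deriv_le_of_jacobi_ode (fun x => (hasDerivAt_jacobiP α β n x).differentiableAt)
          (fun x => (hasDerivAt_deriv_jacobiP α β n x).differentiableAt) (jacobiP_ode α β n)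
          hK hab hy
    _ ≤ n * (n + α + β + 1 : ℝ) * (exp (|α| + |β|) * n ^ max α β) ^ 2 :=
        mul_le_mul_of_nonneg_left (max_sq_jacobiP_le hα hβ hn) hK.le
    _ ≤ (α + β + 2) * n ^ 2 * (exp (|α| + |β|) * n ^ max α β) ^ 2 :=
        mul_le_mul_of_nonneg_right hKle (sq_nonneg _)
    _ = _ := by ring

end Jacobi

/-- For Jacobi polynomials with `α, β ≥ -1/2` there is a constant `C = C(α,β)` with
`sup_{y∈(-1,1)} √(1-y²) |(P_n^{(α,β)})'(y)| ≤ C n^{1+q}`, `q = max{α,β}`, for `n ≥ 1`. -/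
theorem stmt12 (α β : ℝ) (hα : -(1 / 2 : ℝ) ≤ α) (hβ : -(1 / 2 : ℝ) ≤ β) :
    ∃ C > 0, ∀ n : ℕ, 1 ≤ n → ∀ y ∈ Set.Ioo (-1 : ℝ) 1,
      Real.sqrt (1 - y ^ 2) * |deriv (jacobiP α β n) y| ≤ C * (n : ℝ) ^ (1 + max α β) := by
  refine ⟨√(α + β + 2) * exp (|α| + |β|), mul_pos (sqrt_pos.mpr (by linarith)) (exp_pos _),
    fun n hn y hy => ?_⟩
  have hy2 : 0 ≤ 1 - y ^ 2 := by nlinarith [hy.1, hy.2]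
  calc √(1 - y ^ 2) * |deriv (jacobiP α β n) y|
      = √((1 - y ^ 2) * deriv (jacobiP α β n) y ^ 2) := by rw [sqrt_mul hy2, sqrt_sq_eq_abs]
    _ ≤ √((α + β + 2) * (n * (exp (|α| + |β|) * n ^ max α β)) ^ 2) :=
        sqrt_le_sqrt (one_sub_sq_mul_sq_deriv_jacobiP_le (by linarith) (by linarith)
          (by linarith) hn (Set.Ioo_subset_Icc_self hy))
    _ = √(α + β + 2) * exp (|α| + |β|) * (n : ℝ) ^ (1 + max α β) := by
        rw [sqrt_mul (by linarith), sqrt_sq (by positivity), rpow_add (by positivity), rpow_one]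
        ring
end
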